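/- For solutions of the two-layer Lorenz 96 system with initial data in the absorbing ball of radius ρ_*, the time derivatives satisfy sup_{t ≥ 0} (‖u̇(t)‖² + ‖v̇(t)‖²) ≤ 4[(1 + ‖γ‖²)ρ_*² + ‖d‖² + ‖γ‖²] ρ_*², where ‖γ‖² = ∑_j γ_j², ‖d‖² = ∑_k d_k² + ∑_{k,j} d_{k,j}², and F² ≤ ρ_*² d_*²/(2K) is used via ρ_*² = 2K F²/d_*². -/

import Mathlib

/-!
Each tendency splits into advection, coupling, damping and forcing parts, and each part is
bounded in `ℓ²` by `A = ∑ u_k²` and `B = ∑ v_{k,j}²`: Cauchy–Schwarz for the coupling and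
damping terms, and for the advection a shift of indices turns `∑ u_{k-1}² (u_{k+1}² + u_{k-2}²)`
into `∑ u_i² (u_{i+1}² + u_{i+2}²) ≤ A²`, the sites `i + 1 ≠ i + 2` being distinct.
The forcing obeys `(K + 1) F² ≤ ρ_*² ∑ d_{k,j}² / 2` because `ρ_*² d_*² = 2 K F²`; when `K = 0`
the absorbing ball is the origin, so `u ≡ 0` and the equation for `u` forces `F = 0`.
Recombining with Young's inequality gives a polynomial in `A, B` that `A + B ≤ ρ_*²` bounds.
-/

open Finset Filter

section Sums

variable {ι κ : Type*} [Fintype ι] [Fintype κ]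

lemma sum_mul_le_sum_mul_sum_of_nonneg {f g : ι → ℝ} (hf : ∀ i, 0 ≤ f i) (hg : ∀ i, 0 ≤ g i) :
    ∑ i, f i * g i ≤ (∑ i, f i) * ∑ i, g i := by
  rw [sum_mul]
  exact sum_le_sum fun i _ =>
    mul_le_mul_of_nonneg_left (single_le_sum (fun j _ => hg j) (mem_univ i)) (hf i)

lemma sum_mul_sq_le_sum_sq_mul_sum_sq (f g : ι → ℝ) :
    ∑ i, (f i * g i) ^ 2 ≤ (∑ i, f i ^ 2) * ∑ i, g i ^ 2 := by
  simp_rw [mul_pow]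
  exact sum_mul_le_sum_mul_sum_of_nonneg (fun i => sq_nonneg _) fun i => sq_nonneg _

lemma add_sq_le_of_pos (x y : ℝ) {μ : ℝ} (hμ : 0 < μ) :
    (x + y) ^ 2 ≤ (1 + μ) * x ^ 2 + (1 + μ⁻¹) * y ^ 2 := by
  have hsq : 0 ≤ μ⁻¹ * (μ * x - y) ^ 2 := by positivity
  have hexpand : μ⁻¹ * (μ * x - y) ^ 2 = μ * x ^ 2 - 2 * x * y + μ⁻¹ * y ^ 2 := by
    field_simp
    ring
  nlinarith

lemma sum_add_add_sub_add_sq_le (a b c f : ι → ℝ) {μ : ℝ} (hμ : 0 < μ) :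
    ∑ i, (a i + b i - c i + f i) ^ 2
      ≤ 2 * (1 + μ) * ∑ i, a i ^ 2 + 2 * (1 + μ⁻¹) * ∑ i, b i ^ 2
        + 4 * ∑ i, c i ^ 2 + 4 * ∑ i, f i ^ 2 := by
  simp only [mul_sum, ← sum_add_distrib]
  refine sum_le_sum fun i _ => ?_
  have hab := add_sq_le_of_pos (a i) (b i) hμ
  have hcf := add_sq_le (a := f i) (b := -c i)
  calc (a i + b i - c i + f i) ^ 2 = ((a i + b i) + (f i + -c i)) ^ 2 := by ring
    _ ≤ 2 * ((a i + b i) ^ 2 + (f i + -c i) ^ 2) := add_sq_le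
    _ ≤ _ := by rw [neg_sq] at hcf; linarith

lemma sum_sum_neg_mul_sub_sq_le (a x y : κ → ι → ℝ) :
    ∑ k, ∑ j, (-a k j * x k j - y k j) ^ 2
      ≤ 2 * ∑ k, ∑ j, (a k j * x k j) ^ 2 + 2 * ∑ k, ∑ j, y k j ^ 2 := by
  simp only [mul_sum, ← sum_add_distrib]
  refine sum_le_sum fun k _ => sum_le_sum fun j _ => ?_
  convert add_sq_le (a := a k j * x k j) (b := y k j) using 1 <;> ring

lemma card_mul_sq_le_sum_sum_sq [Nonempty ι] {c : ℝ} {a : κ → ι → ℝ} (hc : 0 ≤ c)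
    (hca : ∀ k j, c ≤ a k j) : Fintype.card κ * c ^ 2 ≤ ∑ k, ∑ j, a k j ^ 2 := by
  obtain ⟨j₀⟩ := ‹Nonempty ι›
  calc (Fintype.card κ : ℝ) * c ^ 2 = ∑ _k : κ, c ^ 2 := by simp
    _ ≤ ∑ k, a k j₀ ^ 2 := sum_le_sum fun k _ => pow_le_pow_left₀ hc (hca k j₀) 2
    _ ≤ ∑ k, ∑ j, a k j ^ 2 := sum_le_sum fun k _ =>
        single_le_sum (f := fun j => a k j ^ 2) (fun j _ => sq_nonneg _) (mem_univ j₀)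

lemma sum_coupling_sq_le (γ : ι → ℝ) (u : κ → ℝ) (v : κ → ι → ℝ) :
    ∑ k, (∑ j, γ j * v k j * u k) ^ 2
      ≤ (∑ j, γ j ^ 2) * (∑ k, ∑ j, v k j ^ 2) * ∑ k, u k ^ 2 := by
  calc ∑ k, (∑ j, γ j * v k j * u k) ^ 2 = ∑ k, (∑ j, γ j * v k j) ^ 2 * u k ^ 2 := by
        simp only [← sum_mul, mul_pow]
    _ ≤ ∑ k, ((∑ j, γ j ^ 2) * ∑ j, v k j ^ 2) * u k ^ 2 := by
        gcongr with k
        exact sum_mul_sq_le_sq_mul_sq _ _ _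
    _ ≤ (∑ k, (∑ j, γ j ^ 2) * ∑ j, v k j ^ 2) * ∑ k, u k ^ 2 :=
        sum_mul_le_sum_mul_sum_of_nonneg (fun k => by positivity) fun k => sq_nonneg _
    _ = _ := by rw [← mul_sum]

lemma sum_sum_mul_sq_sq_le (γ : ι → ℝ) (u : κ → ℝ) :
    ∑ k, ∑ j, (γ j * u k ^ 2) ^ 2 ≤ (∑ j, γ j ^ 2) * (∑ k, u k ^ 2) ^ 2 := by
  calc ∑ k, ∑ j, (γ j * u k ^ 2) ^ 2 = (∑ j, γ j ^ 2) * ∑ k, (u k ^ 2) ^ 2 := by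
        simp only [mul_pow, ← sum_mul, mul_sum]
    _ ≤ _ := by
        gcongr
        exact sum_sq_le_sq_sum_of_nonneg fun k _ => sq_nonneg _

end Sums

lemma eq_zero_of_hasDerivAt_of_forall_lt {f : ℝ → ℝ} {y a t : ℝ} (hf : HasDerivAt f y t)
    (hat : a < t) (hf₀ : ∀ s, a < s → f s = 0) : y = 0 :=
  hf.unique <| (hasDerivAt_const t 0).congr_of_eventuallyEq <|
    eventually_of_mem (Ioi_mem_nhds hat) hf₀

namespace Lorenz96

variable {R : Type*} [CommRing R] [Fintype R]

lemma sum_advection_sq_le (u : R → ℝ) :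
    ∑ k, (u (k - 1) * (u (k + 1) - u (k - 2))) ^ 2 ≤ 2 * (∑ k, u k ^ 2) ^ 2 := by
  set A := ∑ k, u k ^ 2
  by_cases h12 : (1 : R) = 2
  · have hshift : ∀ k : R, k + 1 = k - 2 := fun k => by linear_combination (-3) * h12
    simp only [hshift, sub_self, mul_zero, ne_eq, OfNat.ofNat_ne_zero, not_false_eq_true,
      zero_pow, sum_const_zero]
    positivity
  have hpair : ∀ i, u (i + 1) ^ 2 + u (i + 2) ^ 2 ≤ A := fun i => by
    classical
    rw [← sum_pair (f := fun k => u k ^ 2) fun h => h12 (add_left_cancel h)]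
    exact sum_le_univ_sum_of_nonneg fun k => sq_nonneg _
  have hshift₂ : ∑ k, u (k - 1) ^ 2 * u (k + 1) ^ 2 = ∑ i, u i ^ 2 * u (i + 2) ^ 2 :=
    Fintype.sum_equiv (Equiv.subRight 1) _ _ fun k => by
      simp only [Equiv.subRight_apply]; ring_nf
  have hshift₁ : ∑ k, u (k - 1) ^ 2 * u (k - 2) ^ 2 = ∑ i, u i ^ 2 * u (i + 1) ^ 2 :=
    Fintype.sum_equiv (Equiv.subRight 2) _ _ fun k => by
      simp only [Equiv.subRight_apply]; ring_nf
  calc ∑ k, (u (k - 1) * (u (k + 1) - u (k - 2))) ^ 2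
      ≤ ∑ k, 2 * (u (k - 1) ^ 2 * u (k + 1) ^ 2 + u (k - 1) ^ 2 * u (k - 2) ^ 2) :=
        sum_le_sum fun k _ => by
          nlinarith [sq_nonneg (u (k - 1) * (u (k + 1) + u (k - 2)))]
    _ = 2 * ∑ i, u i ^ 2 * (u (i + 1) ^ 2 + u (i + 2) ^ 2) := by
        rw [← mul_sum, sum_add_distrib, hshift₂, hshift₁, ← sum_add_distrib]
        simp only [mul_add, add_comm]
    _ ≤ 2 * ∑ i, u i ^ 2 * A := by
        gcongr with i
        exact hpair i
    _ = 2 * A ^ 2 := by rw [← sum_mul, sq]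

lemma sum_tendency_sq_le {ι : Type*} [Fintype ι] (u : R → ℝ) (v : R → ι → ℝ) (γ : ι → ℝ)
    (d : R → ℝ) (dv : R → ι → ℝ) {F s : ℝ} (hγ : 0 < ∑ j, γ j ^ 2)
    (hF : Fintype.card R * F ^ 2 ≤ s * (∑ k, ∑ j, dv k j ^ 2) / 2)
    (hs : (∑ k, u k ^ 2) + ∑ k, ∑ j, v k j ^ 2 ≤ s) :
    (∑ k, (u (k - 1) * (u (k + 1) - u (k - 2)) + (∑ j, γ j * v k j * u k) - d k * u k + F) ^ 2)
        + ∑ k, ∑ j, (-dv k j * v k j - γ j * u k ^ 2) ^ 2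
      ≤ 4 * ((1 + ∑ j, γ j ^ 2) * s + ((∑ k, d k ^ 2) + ∑ k, ∑ j, dv k j ^ 2)
          + ∑ j, γ j ^ 2) * s := by
  set A := ∑ k, u k ^ 2
  set B := ∑ k, ∑ j, v k j ^ 2
  set G := ∑ j, γ j ^ 2
  set Du := ∑ k, d k ^ 2
  set Dv := ∑ k, ∑ j, dv k j ^ 2
  have hA : 0 ≤ A := by positivity
  have hB : 0 ≤ B := by positivity
  have hDu : 0 ≤ Du := by positivity
  have hDv : 0 ≤ Dv := by positivity
  have hdamp : ∑ k, ∑ j, (dv k j * v k j) ^ 2 ≤ Dv * B := by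
    simpa only [Fintype.sum_prod_type] using
      sum_mul_sq_le_sum_sq_mul_sum_sq (fun x : R × ι => dv x.1 x.2) fun x => v x.1 x.2
  have hforce : ∑ _k : R, F ^ 2 = Fintype.card R * F ^ 2 := by simp
  have hweight : 2 * (1 + (G / 2)⁻¹) * (G * B * A) = 2 * G * A * B + 4 * A * B := by
    field_simp
    ring
  calc _ ≤ 2 * (1 + G / 2) * (2 * A ^ 2) + 2 * (1 + (G / 2)⁻¹) * (G * B * A) + 4 * (Du * A)
          + 4 * (s * Dv / 2) + (2 * (Dv * B) + 2 * (G * A ^ 2)) := by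
        gcongr ?_ + ?_
        -- Young's weight `G / 2` makes the advection–coupling cross term cost `G A² + 4 A B`.
        · refine (sum_add_add_sub_add_sq_le _ _ _ _ (half_pos hγ)).trans ?_
          rw [hforce]
          gcongr
          exacts [sum_advection_sq_le u, sum_coupling_sq_le γ u v,
            sum_mul_sq_le_sum_sq_mul_sum_sq d u]
        · refine (sum_sum_neg_mul_sub_sq_le dv v fun k j => γ j * u k ^ 2).trans ?_
          gcongr
          exact sum_sum_mul_sq_sq_le γ u
    _ ≤ _ := by
        rw [hweight]
        nlinarith [mul_le_mul hs hs (by positivity) (by linarith), mul_nonneg hγ.le hA,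
          mul_nonneg hγ.le hB, mul_nonneg hDu hA, mul_nonneg hDv hB]

lemma forcing_eq_zero_of_forall_sum_sq_nonpos {ι : Type*} [Fintype ι] {u : ℝ → R → ℝ}
    {v : ℝ → R → ι → ℝ} {γ : ι → ℝ} {d : R → ℝ} {F : ℝ}
    (hu : ∀ t k, HasDerivAt (fun s => u s k)
      (u t (k - 1) * (u t (k + 1) - u t (k - 2))
        + (∑ j, γ j * v t k j * u t k) - d k * u t k + F) t)
    (hu₀ : ∀ t ≥ (0 : ℝ), ∑ k, u t k ^ 2 ≤ 0) : F = 0 := by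
  have hzero : ∀ t ≥ (0 : ℝ), ∀ k, u t k = 0 := fun t ht k =>
    pow_eq_zero_iff two_ne_zero |>.1 <|
      (sum_eq_zero_iff_of_nonneg fun k _ => sq_nonneg (u t k)).1
        (le_antisymm (hu₀ t ht) (by positivity)) k (mem_univ k)
  have hF := hu 1 0
  simp only [hzero 1 zero_le_one, mul_zero, sum_const_zero, sub_zero, zero_add] at hF
  exact eq_zero_of_hasDerivAt_of_forall_lt hF zero_lt_one fun s hs => hzero s hs.le 0

lemma forcing_sq_le {K : ℕ} (hK : 1 ≤ K) {F dstar ρ D : ℝ} (hdstar : 0 < dstar)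
    (hρ : ρ ^ 2 = 2 * K * F ^ 2 / dstar ^ 2) (hD : (K + 1) * dstar ^ 2 ≤ D) :
    (K + 1) * F ^ 2 ≤ ρ ^ 2 * D / 2 := by
  have hK' : (1 : ℝ) ≤ K := by exact_mod_cast hK
  have hρd : ρ ^ 2 * dstar ^ 2 = 2 * K * F ^ 2 := by
    rw [hρ]
    field_simp
  nlinarith [mul_le_mul_of_nonneg_left hD (sq_nonneg ρ),
    mul_nonneg (sub_nonneg.2 hK') (sq_nonneg F)]

end Lorenz96

open Lorenz96

theorem stmt_5_general (K J : ℕ) [NeZero J]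
    (u : ℝ → ZMod (K + 1) → ℝ) (v : ℝ → ZMod (K + 1) → Fin J → ℝ)
    (γ : Fin J → ℝ) (d : ZMod (K + 1) → ℝ) (dv : ZMod (K + 1) → Fin J → ℝ)
    (F dstar ρ : ℝ)
    (hγ : ∀ j, 0 < γ j) (hd : ∀ k, 0 < d k) (hdv : ∀ k j, 0 < dv k j)
    (hdstar : dstar = Finset.univ.inf' Finset.univ_nonempty
      (fun k => min (d k) (Finset.univ.inf' Finset.univ_nonempty fun j => dv k j)))
    (hρ : ρ ^ 2 = 2 * (K : ℝ) * F ^ 2 / dstar ^ 2)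
    (hu : ∀ t k, HasDerivAt (fun s => u s k)
      (u t (k - 1) * (u t (k + 1) - u t (k - 2))
        + (∑ j, γ j * v t k j * u t k) - d k * u t k + F) t)
    (habs : ∀ t ≥ (0 : ℝ),
      (∑ k, (u t k) ^ 2) + (∑ k, ∑ j, (v t k j) ^ 2) ≤ ρ ^ 2) :
    ∀ t ≥ (0 : ℝ),
      (∑ k, (u t (k - 1) * (u t (k + 1) - u t (k - 2))
          + (∑ j, γ j * v t k j * u t k) - d k * u t k + F) ^ 2)
        + (∑ k, ∑ j, (-(dv k j) * v t k j - γ j * (u t k) ^ 2) ^ 2)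
      ≤ 4 * ((1 + ∑ j, (γ j) ^ 2) * ρ ^ 2
            + ((∑ k, (d k) ^ 2) + ∑ k, ∑ j, (dv k j) ^ 2)
            + ∑ j, (γ j) ^ 2) * ρ ^ 2 := by
  have hdstar_pos : 0 < dstar := by
    rw [hdstar, lt_inf'_iff]
    exact fun k _ => lt_min (hd k) ((lt_inf'_iff _).2 fun j _ => hdv k j)
  have hdstar_le : ∀ k j, dstar ≤ dv k j := fun k j => hdstar ▸
    (inf'_le _ (mem_univ k)).trans ((min_le_right _ _).trans (inf'_le _ (mem_univ j)))
  have hF : (Fintype.card (ZMod (K + 1)) : ℝ) * F ^ 2 ≤ ρ ^ 2 * (∑ k, ∑ j, dv k j ^ 2) / 2 := by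
    rcases K.eq_zero_or_pos with rfl | hK
    · have hρ₀ : ρ ^ 2 = 0 := by simpa using hρ
      have hF₀ : F = 0 := forcing_eq_zero_of_forall_sum_sq_nonpos hu fun t ht => by
        linarith [habs t ht, show (0 : ℝ) ≤ ∑ k, ∑ j, v t k j ^ 2 by positivity]
      simp [hF₀, hρ₀]
    · have hD := card_mul_sq_le_sum_sum_sq hdstar_pos.le hdstar_le
      rw [ZMod.card] at hD ⊢
      push_cast at hD ⊢
      exact forcing_sq_le hK hdstar_pos hρ hD
  have hG : 0 < ∑ j, γ j ^ 2 := sum_pos (fun j _ => pow_pos (hγ j) 2) univ_nonempty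
  intro t ht
  exact sum_tendency_sq_le (u t) (v t) γ d dv hG hF (habs t ht)

/-- Bound on the time derivatives for the two-layer Lorenz 96 system with data in the
absorbing ball: `‖u̇‖² + ‖v̇‖² ≤ 4[(1 + ‖γ‖²)ρ_*² + ‖d‖² + ‖γ‖²] ρ_*²`, where
`‖γ‖² = ∑ γ_j²`, `‖d‖² = ∑ d_k² + ∑ d_{k,j}²`, and `ρ_*² = 2K F²/d_*²`. -/
theorem stmt_5 (K J : ℕ) [NeZero J]
    (u : ℝ → ZMod (K + 1) → ℝ) (v : ℝ → ZMod (K + 1) → Fin J → ℝ)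
    (γ : Fin J → ℝ) (d : ZMod (K + 1) → ℝ) (dv : ZMod (K + 1) → Fin J → ℝ)
    (F dstar ρ : ℝ)
    (hγ : ∀ j, 0 < γ j) (hd : ∀ k, 0 < d k) (hdv : ∀ k j, 0 < dv k j)
    (hdstar : dstar = Finset.univ.inf' Finset.univ_nonempty
      (fun k => min (d k) (Finset.univ.inf' Finset.univ_nonempty fun j => dv k j)))
    (hρ : ρ ^ 2 = 2 * (K : ℝ) * F ^ 2 / dstar ^ 2)
    (hu : ∀ t k, HasDerivAt (fun s => u s k)
      (u t (k - 1) * (u t (k + 1) - u t (k - 2))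
        + (∑ j, γ j * v t k j * u t k) - d k * u t k + F) t)
    (hv : ∀ t k j, HasDerivAt (fun s => v s k j)
      (-(dv k j) * v t k j - γ j * (u t k) ^ 2) t)
    (habs : ∀ t ≥ (0 : ℝ),
      (∑ k, (u t k) ^ 2) + (∑ k, ∑ j, (v t k j) ^ 2) ≤ ρ ^ 2) :
    ∀ t ≥ (0 : ℝ),
      (∑ k, (u t (k - 1) * (u t (k + 1) - u t (k - 2))
          + (∑ j, γ j * v t k j * u t k) - d k * u t k + F) ^ 2)
        + (∑ k, ∑ j, (-(dv k j) * v t k j - γ j * (u t k) ^ 2) ^ 2)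
      ≤ 4 * ((1 + ∑ j, (γ j) ^ 2) * ρ ^ 2
            + ((∑ k, (d k) ^ 2) + ∑ k, ∑ j, (dv k j) ^ 2)
            + ∑ j, (γ j) ^ 2) * ρ ^ 2 :=
  stmt_5_general K J u v γ d dv F dstar ρ hγ hd hdv hdstar hρ hu habs
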